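/- If q is the principal denominator sequence of an irrational α ∈ (0,1) and sup_n q_{n+1}/q_n = ∞, then G₁(q) = {t ∈ ℝ/ℤ : ∑_n ‖q_n t‖ < ∞} is uncountable. -/

import Mathlib

/-!
Let `α = ∑ₘ (-1)ᵐ / (qₘ qₘ₊₁)`, whose convergents are `pₙ / qₙ`, and `ηₙ = qₙ α - pₙ`. The
alternating series gives `1 / (2 qₙ₊₁) ≤ |ηₙ| ≤ 1 / qₙ₊₁`, and `qₙ ηₘ ≡ qₘ ηₙ (mod 1)`. Bounding
`‖qₙ ηₘ‖` by `qₙ |ηₘ|` for `n ≤ m` and by `qₘ |ηₙ|` for `n > m`, and using that `q` at least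
doubles every two steps, gives `∑ₙ ‖qₙ ηₘ‖ ≤ 8 qₘ / qₘ₊₁`. Since the ratios `qₙ₊₁ / qₙ` are
unbounded we may pick `N₀ < N₁ < ⋯` with `q_{Nₖ+1} ≥ 8ᵏ⁺¹ q_{Nₖ}`. Then for every `s ⊆ ℕ` the
point `∑_{k ∈ s} η_{Nₖ}` lies in `G₁(q)`, and since `|η_{Nₖ}|` decreases by a factor at least
`3` at each step, distinct `s` give distinct points of `ℝ/ℤ`.
-/

/-- `G₁(q)` inside the circle `ℝ/ℤ`; the norm on `AddCircle (1:ℝ)` is the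
distance to the nearest integer. -/
noncomputable def G1 (q : ℕ → ℕ) : Set (AddCircle (1:ℝ)) :=
  {t | Summable (fun n => ‖q n • t‖)}

open Finset Filter

section TwoStepDoubling

variable {g : ℕ → ℝ}

theorem sum_range_shift_le_of_two_mul_le (hg : ∀ n, 0 ≤ g n) (h : ∀ n, 2 * g (n + 2) ≤ g n)
    (R m : ℕ) : ∑ i ∈ range R, g (m + i) ≤ 2 * g m + 2 * g (m + 1) := by
  induction R generalizing m with
  | zero => simp only [range_zero, sum_empty]; linarith [hg m, hg (m + 1)]
  | succ R ih =>
    rw [sum_range_succ']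
    have hR : ∑ i ∈ range R, g (m + (i + 1)) ≤ 2 * g (m + 1) + 2 * g (m + 2) := by
      simpa only [add_assoc, add_comm 1] using ih (m + 1)
    rw [add_zero]
    linarith [h m]

theorem sum_range_le_of_two_mul_le (hg : ∀ n, 0 ≤ g n) (h : ∀ n, 2 * g n ≤ g (n + 2)) (m : ℕ) :
    ∑ i ∈ range (m + 2), g i ≤ 2 * g (m + 1) + 2 * g m := by
  induction m with
  | zero => simp only [sum_range_succ, range_zero, sum_empty]; linarith [hg 0, hg 1]
  | succ m ih => rw [sum_range_succ]; linarith [h m]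

end TwoStepDoubling

theorem UnitAddCircle.norm_coe_le_abs (x : ℝ) : ‖(x : AddCircle (1 : ℝ))‖ ≤ |x| := by
  rw [UnitAddCircle.norm_eq]
  simpa using round_le x 0

theorem AddCircle.nsmul_coe_one (n : ℕ) (x : ℝ) :
    n • (x : AddCircle (1 : ℝ)) = ((n * x : ℝ) : AddCircle (1 : ℝ)) := by
  rw [← AddCircle.coe_nsmul, nsmul_eq_mul]

theorem UnitAddCircle.eq_of_coe_eq_of_abs_sub_lt_one {x y : ℝ}
    (h : (x : AddCircle (1 : ℝ)) = y) (hxy : |x - y| < 1) : x = y := by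
  rw [← sub_eq_zero, ← AddCircle.coe_sub, AddCircle.coe_eq_zero_iff] at h
  obtain ⟨n, hn⟩ := h
  rw [← hn, zsmul_one, ← Int.cast_abs, ← Int.cast_one, Int.cast_lt, Int.abs_lt_one_iff] at hxy
  rw [← sub_eq_zero, ← hn, hxy, zero_smul]

theorem abs_indicator_sub_indicator_le (s t : Set ℕ) (u : ℕ → ℝ) (j : ℕ) :
    |s.indicator u j - t.indicator u j| ≤ |u j| := by
  by_cases hs : j ∈ s <;> by_cases ht : j ∈ t <;> simp [hs, ht]

section ThreeMulLacunary

variable {u : ℕ → ℝ} (hu : ∀ k, 3 * |u (k + 1)| ≤ |u k|)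
include hu

theorem abs_add_le_of_three_mul_le (k i : ℕ) : |u (i + k)| ≤ (1 / 3) ^ i * |u k| := by
  induction i with
  | zero => simp
  | succ i ih =>
    rw [show i + 1 + k = i + k + 1 by omega, pow_succ]
    linarith [hu (i + k)]

theorem summable_abs_of_three_mul_le : Summable fun k => |u k| :=
  ((summable_geometric_of_lt_one (r := (1 / 3 : ℝ)) (by norm_num) (by norm_num)).mul_right
    |u 0|).of_nonneg_of_le (fun _ => abs_nonneg _) fun i => by
      simpa only [add_zero] using abs_add_le_of_three_mul_le hu 0 i

theorem abs_tsum_tail_le {d : ℕ → ℝ} (hd : ∀ j, |d j| ≤ |u j|) (k : ℕ) :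
    |∑' i, d (i + (k + 1))| ≤ |u k| / 2 := by
  have hgeo : Summable fun i : ℕ => (1 / 3 : ℝ) ^ i * |u (k + 1)| :=
    (summable_geometric_of_lt_one (by norm_num) (by norm_num)).mul_right _
  have hbound (i : ℕ) : |d (i + (k + 1))| ≤ (1 / 3) ^ i * |u (k + 1)| :=
    (hd _).trans (abs_add_le_of_three_mul_le hu _ _)
  have habs : Summable fun i => |d (i + (k + 1))| :=
    hgeo.of_nonneg_of_le (fun _ => abs_nonneg _) hbound
  have hnorm : |∑' i, d (i + (k + 1))| ≤ ∑' i, |d (i + (k + 1))| := by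
    simpa only [Real.norm_eq_abs] using norm_tsum_le_tsum_norm (f := fun i => d (i + (k + 1))) habs
  calc |∑' i, d (i + (k + 1))| ≤ ∑' i : ℕ, (1 / 3 : ℝ) ^ i * |u (k + 1)| :=
        hnorm.trans (habs.tsum_le_tsum hbound hgeo)
    _ = 3 / 2 * |u (k + 1)| := by
        rw [tsum_mul_right, tsum_geometric_of_lt_one (by norm_num) (by norm_num)]
        norm_num
    _ ≤ |u k| / 2 := by linarith [hu k]

theorem summable_indicator_of_three_mul_le (s : Set ℕ) : Summable (s.indicator u) :=
  (summable_abs_of_three_mul_le hu).of_norm_bounded fun j => by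
    by_cases hj : j ∈ s <;> simp [hj]

theorem tsum_indicator_sub_tsum_indicator (s t : Set ℕ) :
    ∑' j, s.indicator u j - ∑' j, t.indicator u j = ∑' j, (s.indicator u j - t.indicator u j) :=
  (Summable.tsum_sub (summable_indicator_of_three_mul_le hu s)
    (summable_indicator_of_three_mul_le hu t)).symm

theorem injective_tsum_indicator_of_three_mul_le (hu0 : ∀ k, u k ≠ 0) :
    Function.Injective fun s : Set ℕ => ∑' j, s.indicator u j := by
  classical
  intro s t (hst : ∑' j, s.indicator u j = ∑' j, t.indicator u j)
  by_contra hne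
  have hex : ∃ k, ¬(k ∈ s ↔ k ∈ t) := by
    by_contra! h
    exact hne (Set.ext h)
  set k := Nat.find hex
  set d := fun j => s.indicator u j - t.indicator u j
  have hd_lt (j : ℕ) (hj : j < k) : d j = 0 := by
    have := not_not.1 (Nat.find_min hex hj)
    simp only [d, Set.indicator_apply]
    split_ifs with hs ht ht <;> simp [hs, ht] at this ⊢
  have hd_k : |d k| = |u k| := by
    have := Nat.find_spec hex
    simp only [d, Set.indicator_apply]
    split_ifs <;> first | tauto | simp
  have hsum : Summable d := (summable_indicator_of_three_mul_le hu s).sub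
    (summable_indicator_of_three_mul_le hu t)
  have hzero : d k + ∑' i, d (i + (k + 1)) = 0 := by
    have h := hsum.sum_add_tsum_nat_add (k + 1)
    rwa [sum_range_succ, sum_eq_zero fun j hj => hd_lt j (mem_range.1 hj), zero_add,
      ← tsum_indicator_sub_tsum_indicator hu, hst, sub_self] at h
  have htail := abs_tsum_tail_le hu (abs_indicator_sub_indicator_le s t u) k
  rw [eq_neg_of_add_eq_zero_left hzero, abs_neg] at hd_k
  linarith [abs_pos.2 (hu0 k)]

theorem injective_coe_tsum_indicator_of_three_mul_le (hu0 : ∀ k, u k ≠ 0) (h0 : |u 0| < 2 / 3) :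
    Function.Injective fun s : Set ℕ => ((∑' j, s.indicator u j : ℝ) : AddCircle (1 : ℝ)) := by
  intro s t hst
  refine injective_tsum_indicator_of_three_mul_le hu hu0
    (UnitAddCircle.eq_of_coe_eq_of_abs_sub_lt_one hst ?_)
  have hsplit := ((summable_indicator_of_three_mul_le hu s).sub
    (summable_indicator_of_three_mul_le hu t)).sum_add_tsum_nat_add 1
  rw [sum_range_one, ← tsum_indicator_sub_tsum_indicator hu] at hsplit
  rw [← hsplit]
  have := abs_tsum_tail_le hu (abs_indicator_sub_indicator_le s t u) 0
  have := abs_indicator_sub_indicator_le s t u 0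
  linarith [abs_add_le (s.indicator u 0 - t.indicator u 0)
    (∑' i, (s.indicator u (i + (0 + 1)) - t.indicator u (i + (0 + 1))))]

end ThreeMulLacunary

theorem not_countable_of_injective_set_nat {X : Type*} {S : Set X} {f : Set ℕ → X}
    (hf : Function.Injective f) (hS : ∀ s, f s ∈ S) : ¬S.Countable := by
  intro hc
  have := hc.to_subtype
  have : Countable (Set ℕ) := Function.Injective.countable (f := fun s => (⟨f s, hS s⟩ : S))
    fun _ _ h => hf (congrArg Subtype.val h)
  obtain ⟨g, hg⟩ := exists_injective_nat (Set ℕ)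
  exact Function.cantor_injective g hg

theorem zero_mem_G1 (q : ℕ → ℕ) : (0 : AddCircle (1 : ℝ)) ∈ G1 q := by
  simp [G1, summable_zero]

theorem coe_tsum_mem_G1 {q : ℕ → ℕ} {t b : ℕ → ℝ} (ht : Summable t)
    (hmem : ∀ j, (t j : AddCircle (1 : ℝ)) ∈ G1 q)
    (hb : ∀ j, ∑' n, ‖q n • (t j : AddCircle (1 : ℝ))‖ ≤ b j) (hbs : Summable b) :
    ((∑' j, t j : ℝ) : AddCircle (1 : ℝ)) ∈ G1 q := by
  set F : ℕ × ℕ → ℝ := fun p => ‖q p.2 • (t p.1 : AddCircle (1 : ℝ))‖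
  have hF : Summable F := (summable_prod_of_nonneg fun _ => norm_nonneg _).2
    ⟨hmem, hbs.of_nonneg_of_le (fun _ => tsum_nonneg fun _ => norm_nonneg _) hb⟩
  have hle (n : ℕ) : ‖q n • ((∑' j, t j : ℝ) : AddCircle (1 : ℝ))‖ ≤ ∑' j, F (j, n) := by
    have hsum : HasSum (fun j => q n • (t j : AddCircle (1 : ℝ)))
        (q n • ((∑' j, t j : ℝ) : AddCircle (1 : ℝ))) := by
      simp only [AddCircle.nsmul_coe_one]
      exact (ht.hasSum.mul_left (q n : ℝ)).map _ (AddCircle.continuous_mk' 1)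
    rw [← hsum.tsum_eq]
    exact norm_tsum_le_tsum_norm (hF.prod_symm.prod_factor n)
  exact hF.prod_symm.prod.of_nonneg_of_le (fun _ => norm_nonneg _) hle

structure IsDenominatorSeq (a q : ℕ → ℕ) : Prop where
  one_le_a : ∀ n, 1 ≤ n → 1 ≤ a n
  q_zero : q 0 = 1
  q_one : q 1 = a 1
  q_add_two : ∀ n, q (n + 2) = a (n + 2) * q (n + 1) + q n

def convergentNum (a : ℕ → ℕ) : ℕ → ℤ
  | 0 => 0
  | 1 => 1
  | n + 2 => a (n + 2) * convergentNum a (n + 1) + convergentNum a n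

noncomputable def convergentGap (q : ℕ → ℕ) (n : ℕ) : ℝ := ((q n : ℝ) * q (n + 1))⁻¹

noncomputable def cfValue (q : ℕ → ℕ) : ℝ := ∑' m, (-1) ^ m * convergentGap q m

noncomputable def approxError (a q : ℕ → ℕ) (n : ℕ) : ℝ := q n * cfValue q - convergentNum a n

namespace IsDenominatorSeq

variable {a q : ℕ → ℕ} (hq : IsDenominatorSeq a q)
include hq

theorem one_le (n : ℕ) : 1 ≤ q n := by
  induction n using Nat.twoStepInduction with
  | zero => exact hq.q_zero.ge
  | one => exact hq.q_one ▸ hq.one_le_a 1 le_rfl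
  | more n _ ih => rw [hq.q_add_two]; omega

theorem add_le (n : ℕ) : q (n + 1) + q n ≤ q (n + 2) := by
  rw [hq.q_add_two]
  nlinarith [hq.one_le_a (n + 2) (by omega)]

theorem monotone : Monotone q := by
  refine monotone_nat_of_le_succ fun n => ?_
  cases n with
  | zero => rw [hq.q_zero]; exact hq.one_le 1
  | succ n => show q (n + 1) ≤ q (n + 2); have := hq.add_le n; omega

theorem two_mul_le (n : ℕ) : 2 * q n ≤ q (n + 2) := by
  have := hq.add_le n; have := hq.monotone (Nat.le_add_right n 1); omega

theorem cast_pos (n : ℕ) : (0 : ℝ) < q n := by exact_mod_cast hq.one_le n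

theorem two_mul_inv_le (n : ℕ) : 2 * (q (n + 2) : ℝ)⁻¹ ≤ (q n : ℝ)⁻¹ := by
  have : (2 * q n : ℝ) ≤ q (n + 2) := by exact_mod_cast hq.two_mul_le n
  rw [← div_eq_mul_inv, div_le_iff₀ (hq.cast_pos _), ← div_eq_inv_mul, le_div_iff₀ (hq.cast_pos _)]
  linarith

theorem sum_range_le (m : ℕ) : ∑ n ∈ range (m + 1), (q n : ℝ) ≤ 4 * q m := by
  have hdouble (n : ℕ) : 2 * (q n : ℝ) ≤ q (n + 2) := by exact_mod_cast hq.two_mul_le n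
  cases m with
  | zero => simp only [zero_add, sum_range_one]; linarith [hq.cast_pos 0]
  | succ m =>
    have hmono : (q m : ℝ) ≤ q (m + 1) := by exact_mod_cast hq.monotone (Nat.le_add_right m 1)
    linarith [sum_range_le_of_two_mul_le (fun n => (hq.cast_pos n).le) hdouble m]

theorem sum_range_inv_le (R m : ℕ) :
    ∑ i ∈ range R, (q (m + i) : ℝ)⁻¹ ≤ 4 * (q m : ℝ)⁻¹ := by
  have hmono : (q (m + 1) : ℝ)⁻¹ ≤ (q m : ℝ)⁻¹ :=
    inv_anti₀ (hq.cast_pos m) (by exact_mod_cast hq.monotone (Nat.le_add_right m 1))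
  linarith [sum_range_shift_le_of_two_mul_le (fun n => (inv_pos.2 (hq.cast_pos n)).le)
    hq.two_mul_inv_le R m]

theorem convergentNum_mul_sub (n : ℕ) :
    convergentNum a (n + 1) * q n - convergentNum a n * q (n + 1) = (-1) ^ n := by
  induction n with
  | zero => simp [convergentNum, hq.q_zero]
  | succ n ih =>
    rw [show convergentNum a (n + 1 + 1) = a (n + 2) * convergentNum a (n + 1) + convergentNum a n
      from rfl, hq.q_add_two, pow_succ, ← ih]
    push_cast
    ring

theorem convergentGap_antitone : Antitone (convergentGap q) := by
  refine antitone_nat_of_succ_le fun n => inv_anti₀ (mul_pos (hq.cast_pos _) (hq.cast_pos _)) ?_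
  have h1 : (q n : ℝ) ≤ q (n + 1) := by exact_mod_cast hq.monotone (Nat.le_add_right n 1)
  have h2 : (q (n + 1) : ℝ) ≤ q (n + 2) := by exact_mod_cast hq.monotone (Nat.le_add_right _ 1)
  exact mul_le_mul h1 h2 (hq.cast_pos _).le (hq.cast_pos _).le

theorem summable_convergentGap : Summable (convergentGap q) := by
  have hinv : Summable fun n => (q n : ℝ)⁻¹ :=
    summable_of_sum_range_le (fun n => (inv_pos.2 (hq.cast_pos n)).le)
      (fun R => by simpa only [zero_add] using hq.sum_range_inv_le R 0)
  refine hinv.of_nonneg_of_le (fun n => (inv_pos.2 (mul_pos (hq.cast_pos _) (hq.cast_pos _))).le)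
    fun n => ?_
  rw [convergentGap, mul_inv]
  exact mul_le_of_le_one_right (inv_pos.2 (hq.cast_pos n)).le
    (inv_le_one_of_one_le₀ (by exact_mod_cast hq.one_le _))

theorem convergentNum_div_eq_sum (n : ℕ) :
    (convergentNum a n : ℝ) / q n = ∑ m ∈ range n, (-1) ^ m * convergentGap q m := by
  induction n with
  | zero => simp [convergentNum]
  | succ n ih =>
    have hdet : (convergentNum a (n + 1) : ℝ) * q n - convergentNum a n * q (n + 1) = (-1) ^ n := by
      exact_mod_cast hq.convergentNum_mul_sub n
    rw [sum_range_succ, ← ih, convergentGap]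
    have := hq.cast_pos n
    have := hq.cast_pos (n + 1)
    field_simp
    linear_combination hdet

theorem approxError_eq (n : ℕ) :
    approxError a q n = (-1) ^ n * q n * ∑' i, (-1) ^ i * convergentGap q (n + i) := by
  have hsplit := (hq.summable_convergentGap.alternating).sum_add_tsum_nat_add n
  have htail : ∑' i, (-1 : ℝ) ^ (i + n) * convergentGap q (i + n)
      = (-1) ^ n * ∑' i, (-1) ^ i * convergentGap q (n + i) := by
    rw [← tsum_mul_left]
    exact tsum_congr fun i => by rw [add_comm i n, pow_add]; ring
  rw [approxError, cfValue, ← hsplit, htail, ← hq.convergentNum_div_eq_sum n]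
  field_simp [(hq.cast_pos n).ne']
  ring

theorem tendsto_alternating_sum_convergentGap (n : ℕ) :
    Tendsto (fun R => ∑ i ∈ range R, (-1) ^ i * convergentGap q (n + i)) atTop
      (nhds (∑' i, (-1) ^ i * convergentGap q (n + i))) :=
  ((summable_nat_add_iff n).2 hq.summable_convergentGap |>.congr fun i => by
    rw [add_comm]).tendsto_alternating_series_tsum

theorem antitone_convergentGap_add (n : ℕ) : Antitone fun i => convergentGap q (n + i) :=
  hq.convergentGap_antitone.comp_monotone fun _ _ h => Nat.add_le_add_left h n

theorem convergentGap_sub_le_tsum (n : ℕ) :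
    convergentGap q n - convergentGap q (n + 1) ≤ ∑' i, (-1) ^ i * convergentGap q (n + i) := by
  have := (hq.antitone_convergentGap_add n).alternating_series_le_tendsto
    (hq.tendsto_alternating_sum_convergentGap n) 1
  simpa [sum_range_succ, ← sub_eq_add_neg] using this

theorem tsum_le_convergentGap (n : ℕ) :
    ∑' i, (-1) ^ i * convergentGap q (n + i) ≤ convergentGap q n := by
  have := (hq.antitone_convergentGap_add n).tendsto_le_alternating_series
    (hq.tendsto_alternating_sum_convergentGap n) 0
  simpa using this

theorem abs_approxError_eq (n : ℕ) :
    |approxError a q n| = q n * ∑' i, (-1) ^ i * convergentGap q (n + i) := by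
  have hnonneg : 0 ≤ ∑' i, (-1) ^ i * convergentGap q (n + i) :=
    (sub_nonneg.2 (hq.convergentGap_antitone (Nat.le_add_right n 1))).trans
      (hq.convergentGap_sub_le_tsum n)
  rw [hq.approxError_eq, mul_assoc, abs_mul, abs_pow, abs_neg, abs_one, one_pow, one_mul,
    abs_mul, Nat.abs_cast, abs_of_nonneg hnonneg]

theorem abs_approxError_le (n : ℕ) : |approxError a q n| ≤ (q (n + 1) : ℝ)⁻¹ := by
  have hq_gap : (q n : ℝ) * convergentGap q n = (q (n + 1) : ℝ)⁻¹ := by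
    rw [convergentGap, mul_inv, ← mul_assoc, mul_inv_cancel₀ (hq.cast_pos n).ne', one_mul]
  rw [hq.abs_approxError_eq, ← hq_gap]
  exact mul_le_mul_of_nonneg_left (hq.tsum_le_convergentGap n) (hq.cast_pos n).le

theorem inv_two_mul_le_abs_approxError (n : ℕ) :
    (2 * q (n + 1) : ℝ)⁻¹ ≤ |approxError a q n| := by
  have h0 := hq.cast_pos n
  have h1 := hq.cast_pos (n + 1)
  have h2 := hq.cast_pos (n + 2)
  have hdouble : (2 * q n : ℝ) ≤ q (n + 2) := by exact_mod_cast hq.two_mul_le n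
  have hgap : (2 * q (n + 1) : ℝ)⁻¹ ≤ q n * (convergentGap q n - convergentGap q (n + 1)) := by
    rw [convergentGap, convergentGap, show n + 1 + 1 = n + 2 from rfl]
    rw [inv_le_iff_one_le_mul₀ (by positivity)]
    field_simp
    nlinarith
  rw [hq.abs_approxError_eq]
  exact hgap.trans (mul_le_mul_of_nonneg_left (hq.convergentGap_sub_le_tsum n) h0.le)

omit hq in
theorem coe_mul_approxError_comm (m n : ℕ) :
    ((q n * approxError a q m : ℝ) : AddCircle (1 : ℝ))
      = ((q m * approxError a q n : ℝ) : AddCircle (1 : ℝ)) := by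
  have hint : (q n * approxError a q m : ℝ) = q m * approxError a q n
      + ((q m * convergentNum a n - q n * convergentNum a m : ℤ) : ℝ) := by
    rw [approxError, approxError]
    push_cast
    ring
  rw [hint, AddCircle.coe_add, add_eq_left]
  exact (AddCircle.coe_eq_zero_iff 1).2 ⟨q m * convergentNum a n - q n * convergentNum a m, by simp⟩

theorem norm_nsmul_approxError_le_left (m n : ℕ) :
    ‖q n • (approxError a q m : AddCircle (1 : ℝ))‖ ≤ q n * (q (m + 1) : ℝ)⁻¹ := by
  rw [AddCircle.nsmul_coe_one]
  refine (UnitAddCircle.norm_coe_le_abs _).trans ?_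
  rw [abs_mul, Nat.abs_cast]
  exact mul_le_mul_of_nonneg_left (hq.abs_approxError_le m) (hq.cast_pos n).le

theorem norm_nsmul_approxError_le_right (m n : ℕ) :
    ‖q n • (approxError a q m : AddCircle (1 : ℝ))‖ ≤ q m * (q (n + 1) : ℝ)⁻¹ := by
  rw [AddCircle.nsmul_coe_one, coe_mul_approxError_comm, ← AddCircle.nsmul_coe_one]
  exact hq.norm_nsmul_approxError_le_left n m

theorem sum_range_norm_nsmul_approxError_le (m R : ℕ) :
    ∑ n ∈ range R, ‖q n • (approxError a q m : AddCircle (1 : ℝ))‖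
      ≤ 8 * (q m * (q (m + 1) : ℝ)⁻¹) := by
  set f := fun n => ‖q n • (approxError a q m : AddCircle (1 : ℝ))‖
  have hinv_pos := inv_pos.2 (hq.cast_pos (m + 1))
  have hhead : ∑ n ∈ range (m + 1), f n ≤ 4 * (q m * (q (m + 1) : ℝ)⁻¹) := calc
    ∑ n ∈ range (m + 1), f n ≤ ∑ n ∈ range (m + 1), q n * (q (m + 1) : ℝ)⁻¹ :=
      sum_le_sum fun n _ => hq.norm_nsmul_approxError_le_left m n
    _ = (∑ n ∈ range (m + 1), (q n : ℝ)) * (q (m + 1) : ℝ)⁻¹ := (sum_mul ..).symm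
    _ ≤ 4 * q m * (q (m + 1) : ℝ)⁻¹ := mul_le_mul_of_nonneg_right (hq.sum_range_le m) hinv_pos.le
    _ = _ := mul_assoc ..
  have htail : ∑ i ∈ range R, f (m + 1 + i) ≤ 4 * (q m * (q (m + 1) : ℝ)⁻¹) := calc
    ∑ i ∈ range R, f (m + 1 + i) ≤ ∑ i ∈ range R, q m * (q (m + 1 + i + 1) : ℝ)⁻¹ :=
      sum_le_sum fun i _ => hq.norm_nsmul_approxError_le_right m _
    _ = q m * ∑ i ∈ range R, (q (m + 1 + (i + 1)) : ℝ)⁻¹ := (mul_sum ..).symm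
    _ ≤ q m * (4 * (q (m + 1) : ℝ)⁻¹) := by
      gcongr
      have := hq.sum_range_inv_le (R + 1) (m + 1)
      rw [sum_range_succ', add_zero] at this
      linarith [inv_pos.2 (hq.cast_pos (m + 1))]
    _ = _ := by ring
  calc ∑ n ∈ range R, f n ≤ ∑ n ∈ range (m + 1 + R), f n :=
        sum_le_sum_of_subset_of_nonneg (range_mono (by omega)) fun _ _ _ => norm_nonneg _
    _ = ∑ n ∈ range (m + 1), f n + ∑ i ∈ range R, f (m + 1 + i) := sum_range_add ..
    _ ≤ _ := by linarith

theorem approxError_mem_G1 (m : ℕ) : (approxError a q m : AddCircle (1 : ℝ)) ∈ G1 q :=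
  summable_of_sum_range_le (fun _ => norm_nonneg _) (hq.sum_range_norm_nsmul_approxError_le m)

theorem tsum_norm_nsmul_approxError_le (m : ℕ) :
    ∑' n, ‖q n • (approxError a q m : AddCircle (1 : ℝ))‖ ≤ 8 * (q m * (q (m + 1) : ℝ)⁻¹) :=
  Real.tsum_le_of_sum_range_le (fun _ => norm_nonneg _) (hq.sum_range_norm_nsmul_approxError_le m)

theorem approxError_ne_zero (n : ℕ) : approxError a q n ≠ 0 := by
  intro h
  have hle := hq.inv_two_mul_le_abs_approxError n
  rw [h, abs_zero] at hle
  have := hq.cast_pos (n + 1)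
  exact absurd hle (not_le.2 (by positivity))

theorem frequently_mul_le (hsup : ∀ M : ℕ, ∃ n, M * q n ≤ q (n + 1)) (M : ℕ) :
    ∃ᶠ n in atTop, M * q n ≤ q (n + 1) := by
  refine frequently_atTop.2 fun B => ?_
  set C := (range (B + 1)).sup q
  obtain ⟨n, hn⟩ := hsup (M + C + 1)
  have hbig : M * q n ≤ q (n + 1) ∧ C < q (n + 1) := by
    have := hq.one_le n
    constructor <;> nlinarith
  refine ⟨n, ?_, hbig.1⟩
  by_contra! hlt
  exact absurd (le_sup (f := q) (mem_range.2 (by omega : n + 1 < B + 1))) (not_le.2 hbig.2)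

theorem exists_lacunary_subseq (hsup : ∀ M : ℕ, ∃ n, M * q n ≤ q (n + 1)) :
    ∃ N : ℕ → ℕ, StrictMono N ∧ ∀ k, 8 ^ (k + 1) * q (N k) ≤ q (N k + 1) :=
  extraction_forall_of_frequently fun k => hq.frequently_mul_le hsup (8 ^ (k + 1))

section Lacunary

variable {N : ℕ → ℕ} (hNq : ∀ k, 8 ^ (k + 1) * q (N k) ≤ q (N k + 1))
include hNq

theorem inv_le_of_lacunary (k : ℕ) : (q (N k + 1) : ℝ)⁻¹ ≤ (1 / 8) ^ (k + 1) := by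
  have : ((8 : ℝ) ^ (k + 1)) ≤ q (N k + 1) := by
    exact_mod_cast (Nat.le_mul_of_pos_right _ (hq.one_le (N k))).trans (hNq k)
  rw [one_div, inv_pow]
  exact inv_anti₀ (by positivity) this

theorem abs_approxError_lt_of_lacunary : |approxError a q (N 0)| < 2 / 3 := by
  have := (hq.abs_approxError_le (N 0)).trans (hq.inv_le_of_lacunary hNq 0)
  linarith

theorem mul_inv_le_of_lacunary (k : ℕ) :
    8 * (q (N k) * (q (N k + 1) : ℝ)⁻¹) ≤ (1 / 8) ^ k := by
  have h8 : (8 : ℝ) ^ (k + 1) * q (N k) ≤ q (N k + 1) := by exact_mod_cast hNq k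
  rw [← div_eq_mul_inv, mul_div_assoc', div_le_iff₀ (hq.cast_pos _)]
  calc 8 * (q (N k) : ℝ) = (1 / 8) ^ k * (8 ^ (k + 1) * q (N k)) := by
        rw [pow_succ, ← mul_assoc, ← mul_assoc, ← mul_pow]; norm_num
    _ ≤ (1 / 8) ^ k * q (N k + 1) := by gcongr

theorem three_mul_abs_approxError_le (hN : StrictMono N) (k : ℕ) :
    3 * |approxError a q (N (k + 1))| ≤ |approxError a q (N k)| := by
  have h8 : 8 * q (N k + 1) ≤ q (N (k + 1) + 1) := calc
    8 * q (N k + 1) ≤ 8 ^ (k + 2) * q (N (k + 1)) :=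
      Nat.mul_le_mul (Nat.le_self_pow (by omega) 8) (hq.monotone (hN (Nat.lt_succ_self k)))
    _ ≤ q (N (k + 1) + 1) := hNq (k + 1)
  have h8' : (8 * q (N k + 1) : ℝ) ≤ q (N (k + 1) + 1) := by exact_mod_cast h8
  have hpos := hq.cast_pos (N k + 1)
  calc 3 * |approxError a q (N (k + 1))| ≤ 3 * (q (N (k + 1) + 1) : ℝ)⁻¹ := by
        gcongr; exact hq.abs_approxError_le _
    _ ≤ 3 * (8 * q (N k + 1) : ℝ)⁻¹ := by gcongr
    _ ≤ (2 * q (N k + 1) : ℝ)⁻¹ := by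
        rw [mul_inv, mul_inv, ← mul_assoc]; gcongr; norm_num
    _ ≤ |approxError a q (N k)| := hq.inv_two_mul_le_abs_approxError _

theorem coe_tsum_indicator_approxError_mem_G1 (hN : StrictMono N) (s : Set ℕ) :
    ((∑' j, s.indicator (fun j => approxError a q (N j)) j : ℝ) : AddCircle (1 : ℝ)) ∈ G1 q := by
  refine coe_tsum_mem_G1 (b := fun j => (1 / 8) ^ j)
    (summable_indicator_of_three_mul_le (hq.three_mul_abs_approxError_le hNq hN) s)
    (fun j => ?_) (fun j => ?_) (summable_geometric_of_lt_one (by norm_num) (by norm_num))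
  · by_cases hj : j ∈ s
    · simpa [hj] using hq.approxError_mem_G1 (N j)
    · simpa [hj] using zero_mem_G1 q
  · by_cases hj : j ∈ s
    · simpa [hj] using (hq.tsum_norm_nsmul_approxError_le (N j)).trans
        (hq.mul_inv_le_of_lacunary hNq j)
    · simp [hj]

end Lacunary

end IsDenominatorSeq

/-- If `q` is the principal denominator sequence of an irrational `α ∈ (0,1)`
(with continued fraction partial quotients `aₙ ≥ 1`) and `sup_n qₙ₊₁/qₙ = ∞`,
then `G₁(q)` is uncountable. -/
theorem stmt5 (a q : ℕ → ℕ) (ha : ∀ n, 1 ≤ n → 1 ≤ a n)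
    (hq0 : q 0 = 1) (hq1 : q 1 = a 1)
    (hrec : ∀ n, q (n + 2) = a (n + 2) * q (n + 1) + q n)
    (hsup : ∀ M : ℕ, ∃ n, M * q n ≤ q (n + 1)) :
    ¬ (G1 q).Countable := by
  have hq : IsDenominatorSeq a q := ⟨ha, hq0, hq1, hrec⟩
  obtain ⟨N, hN, hNq⟩ := hq.exists_lacunary_subseq hsup
  exact not_countable_of_injective_set_nat
    (injective_coe_tsum_indicator_of_three_mul_le (hq.three_mul_abs_approxError_le hNq hN)
      (fun k => hq.approxError_ne_zero (N k)) (hq.abs_approxError_lt_of_lacunary hNq))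
    (hq.coe_tsum_indicator_approxError_mem_G1 hNq hN)
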